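/- Let V = F_2^{2n} with the standard symplectic form ω, partitioned among parties M, and let S, S' ⊆ V be subspaces. Then the following are equivalent: (1) there exist ω-preserving linear maps u_α ∈ Sp(2n_α, F_2) on each party's local space such that S' = (⊕_{α∈M} u_α)·S; (2) there exists a linear invertible map T : S → S' such that (i) ω(T(f)_α, T(g)_α) = ω(f_α, g_α) for all f,g ∈ S and α ∈ M, and (ii) T(S_{α̂}) = S'_{α̂} for all α ∈ M. -/

import Mathlib

/-- The phase space of `ι`-indexed qubits: `G^ι = (F_2 × F_2)^ι`. -/
abbrev PV (ι : Type*) := ι → ZMod 2 × ZMod 2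

/-- The standard symplectic form `ω(f,g) = Σ_j (f_j^x g_j^z + f_j^z g_j^x)`. -/
noncomputable def sympForm (ι : Type*) [Fintype ι] :
    LinearMap.BilinForm (ZMod 2) (PV ι) :=
  LinearMap.mk₂ (ZMod 2)
    (fun f g => ∑ j, ((f j).1 * (g j).2 + (f j).2 * (g j).1))
    (fun m₁ m₂ g => by
      rw [← Finset.sum_add_distrib]
      exact Finset.sum_congr rfl fun j _ => by
        simp only [Pi.add_apply, Prod.fst_add, Prod.snd_add]; ring)
    (fun c m g => by
      simp only [Pi.smul_apply, Prod.smul_fst, Prod.smul_snd, smul_eq_mul]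
      rw [Finset.mul_sum]
      exact Finset.sum_congr rfl fun j _ => by ring)
    (fun m g₁ g₂ => by
      rw [← Finset.sum_add_distrib]
      exact Finset.sum_congr rfl fun j _ => by
        simp only [Pi.add_apply, Prod.fst_add, Prod.snd_add]; ring)
    (fun c m g => by
      simp only [Pi.smul_apply, Prod.smul_fst, Prod.smul_snd, smul_eq_mul]
      rw [Finset.mul_sum]
      exact Finset.sum_congr rfl fun j _ => by ring)

/-- The restriction of the symplectic form to the coordinates in `A`:
`ω(f_A, g_A)`. -/
def sympOn {ι : Type*} (A : Finset ι) (f g : PV ι) : ZMod 2 :=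
  ∑ j ∈ A, ((f j).1 * (g j).2 + (f j).2 * (g j).1)

/-- The set of qubits owned by party `α`. -/
def partySet {ι M : Type*} [Fintype ι] [DecidableEq M] (party : ι → M) (α : M) :
    Finset ι := Finset.univ.filter (fun j => party j = α)

/-- The local subspace `G^n_α` of vectors supported on party `α`'s qubits. -/
def localSub {ι M : Type*} (party : ι → M) (α : M) :
    Submodule (ZMod 2) (PV ι) where
  carrier := {f | ∀ j, party j ≠ α → f j = 0}
  add_mem' := fun hf hg j hj => by
    simp only [Pi.add_apply, hf j hj, hg j hj, add_zero]
  zero_mem' := fun j _ => rfl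
  smul_mem' := fun c f hf j hj => by
    simp only [Pi.smul_apply, hf j hj, smul_zero]

/-- The co-local subgroup `S_α̂` of elements of `S` acting trivially on party `α`. -/
def colocalSub {ι M : Type*} (S : Submodule (ZMod 2) (PV ι)) (party : ι → M) (α : M) :
    Submodule (ZMod 2) (PV ι) :=
  S ⊓ { carrier := {f | ∀ j, party j = α → f j = 0}
        add_mem' := fun hf hg j hj => by
          simp only [Pi.add_apply, hf j hj, hg j hj, add_zero]
        zero_mem' := fun j _ => rfl
        smul_mem' := fun c f hf j hj => by
          simp only [Pi.smul_apply, hf j hj, smul_zero] }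

/-- `S_loc`, the sum of all co-local subgroups of `S`. -/
def Sloc {ι M : Type*} (S : Submodule (ZMod 2) (PV ι)) (party : ι → M) :
    Submodule (ZMod 2) (PV ι) :=
  ⨆ α : M, colocalSub S party α

/-- The subspace `L_α = {f ∈ G^n_α : ω(f, S_loc) = 0}`. -/
noncomputable def Lsub {ι M : Type*} [Fintype ι] (S : Submodule (ZMod 2) (PV ι))
    (party : ι → M) (α : M) : Submodule (ZMod 2) (PV ι) :=
  localSub party α ⊓ LinearMap.BilinForm.orthogonal (sympForm ι) (Sloc S party)


open Module Submodule LinearMap Function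

section Extension

variable {K V : Type*} [Field K] [AddCommGroup V] [Module K V] [FiniteDimensional K V]
variable {B : LinearMap.BilinForm K V}

private lemma skew (halt : B.IsAlt) (x y : V) : B x y = - B y x := by
  have h := halt (x + y)
  simp only [map_add, LinearMap.add_apply, halt x, halt y] at h
  have h2 : B x y + B y x = 0 := by linear_combination h
  linear_combination h2

/-- Step: given a partial isometry and `v` outside its domain, find a suitable image vector. -/
private lemma exists_extension_vector (hB : B.Nondegenerate) (halt : B.IsAlt)
    (p : V →ₗ.[K] V) (hinj : Function.Injective p.toFun)
    (hiso : ∀ x y : p.domain, B (p x) (p y) = B x.1 y.1)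
    (v : V) (hv : v ∉ p.domain) :
    ∃ w, w ∉ LinearMap.range p.toFun ∧ ∀ x : p.domain, B w (p x) = B v x.1 := by
  classical
  set W' : Submodule K V := LinearMap.range p.toFun with hW'
  have hrefl : B.IsRefl := halt.isRefl
  -- a functional witness
  let φe : p.domain ≃ₗ[K] W' := LinearEquiv.ofInjective p.toFun hinj
  let ψ : Module.Dual K W' := (B v) ∘ₗ p.domain.subtype ∘ₗ (φe.symm : W' →ₗ[K] p.domain)
  set w₀ : V := (B.toDual hB).symm (Subspace.dualLift W' ψ) with hw₀
  have hw₀pair : ∀ x : p.domain, B w₀ (p x) = B v x.1 := by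
    intro x
    have hmem : p x ∈ W' := LinearMap.mem_range_self _ x
    have h1 : B w₀ (p x) = Subspace.dualLift W' ψ (p x) := by
      rw [hw₀]; exact LinearMap.BilinForm.apply_toDual_symm_apply (hB := hB) _ _
    rw [h1, Subspace.dualLift_of_mem hmem]
    have : (⟨p x, hmem⟩ : W') = φe x := rfl
    rw [this]
    simp [ψ]
  by_cases hw₀mem : w₀ ∉ W'
  · exact ⟨w₀, hw₀mem, hw₀pair⟩
  push_neg at hw₀mem
  by_cases hz : ∃ z ∈ B.orthogonal W', z ∉ W'
  · obtain ⟨z, hzorth, hzW⟩ := hz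
    refine ⟨w₀ + z, ?_, ?_⟩
    · intro hmem
      exact hzW (by simpa using W'.sub_mem hmem hw₀mem)
    · intro x
      have hzx : B z (p x) = 0 := hrefl _ _ (hzorth (p x) (LinearMap.mem_range_self _ x))
      rw [map_add, LinearMap.add_apply, hzx, add_zero, hw₀pair]
  push_neg at hz
  -- orthogonal W' ≤ W'; derive contradiction: v ∈ p.domain
  exfalso
  have horthle : B.orthogonal W' ≤ W' := hz
  -- the radical of the domain maps onto the orthogonal of W'
  have hRle : p.domain ⊓ B.orthogonal p.domain ≤ p.domain := inf_le_left
  let m : ↥(p.domain ⊓ B.orthogonal p.domain) →ₗ[K] ↥(B.orthogonal W') :=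
    LinearMap.codRestrict _ (p.toFun ∘ₗ Submodule.inclusion hRle) (by
      rintro ⟨x, hx1, hx2⟩
      intro y hy
      obtain ⟨t, rfl⟩ := hy
      show B (p t) _ = 0
      have : B (p t) (p ⟨x, hx1⟩) = B t.1 x := hiso t ⟨x, hx1⟩
      exact this.trans (hx2 t.1 t.2))
  have hminj : Function.Injective m := by
    intro a b hab
    have h1 : p.toFun (Submodule.inclusion hRle a) = p.toFun (Submodule.inclusion hRle b) :=
      congrArg Subtype.val hab
    have h2 := hinj h1
    have h3 := congrArg Subtype.val h2
    simp only [Submodule.coe_inclusion] at h3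
    exact Subtype.ext h3
  have hmsurj : Function.Surjective m := by
    rintro ⟨z, hzorth⟩
    have hzW' : z ∈ W' := horthle hzorth
    obtain ⟨y, hy⟩ := hzW'
    have hy' : p y = z := hy
    have hymem : y.1 ∈ p.domain ⊓ B.orthogonal p.domain := by
      refine ⟨y.2, ?_⟩
      intro a ha
      show B a y.1 = 0
      have h1 : B (p ⟨a, ha⟩) (p y) = B a y.1 := hiso ⟨a, ha⟩ y
      rw [← h1, hy']
      exact hzorth _ (LinearMap.mem_range_self p.toFun ⟨a, ha⟩)
    refine ⟨⟨y.1, hymem⟩, ?_⟩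
    apply Subtype.ext
    show p.toFun (Submodule.inclusion hRle ⟨y.1, hymem⟩) = z
    rw [← hy]
    congr 1
  have hfr1 : finrank K ↥(p.domain ⊓ B.orthogonal p.domain) = finrank K ↥(B.orthogonal W') :=
    (LinearEquiv.ofBijective m ⟨hminj, hmsurj⟩).finrank_eq
  have hfrW' : finrank K W' = finrank K p.domain := φe.finrank_eq.symm
  have hfr2 : finrank K ↥(B.orthogonal W') = finrank K V - finrank K W' :=
    LinearMap.BilinForm.finrank_orthogonal hB W'
  have hfr3 : finrank K ↥(B.orthogonal p.domain) = finrank K V - finrank K p.domain :=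
    LinearMap.BilinForm.finrank_orthogonal hB p.domain
  have hradeq : p.domain ⊓ B.orthogonal p.domain = B.orthogonal p.domain := by
    apply Submodule.eq_of_le_of_finrank_le inf_le_right
    rw [hfr1, hfr2, hfrW', hfr3]
  have horthdomle : B.orthogonal p.domain ≤ p.domain := by
    rw [← hradeq]; exact inf_le_left
  -- w₀ = p u for some u; then v - u ∈ orthogonal domain ≤ domain
  obtain ⟨u, hu⟩ := hw₀mem
  have hu' : p u = w₀ := hu
  have hvu : v - u.1 ∈ B.orthogonal p.domain := by
    intro a ha
    have h1 : B w₀ (p ⟨a, ha⟩) = B v a := hw₀pair ⟨a, ha⟩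
    rw [← hu'] at h1
    have h2 : B (p u) (p ⟨a, ha⟩) = B u.1 a := hiso u ⟨a, ha⟩
    have h3 : B (v - u.1) a = 0 := by
      rw [map_sub, LinearMap.sub_apply, ← h1, h2, sub_self]
    show B a (v - u.1) = 0
    rw [skew halt]; rw [h3]; ring
  have : v ∈ p.domain := by
    have h4 : v - u.1 ∈ p.domain := horthdomle hvu
    have := p.domain.add_mem h4 u.2
    simpa using this
  exact hv this



private lemma extension_aux (hB : B.Nondegenerate) (halt : B.IsAlt) :
    ∀ (k : ℕ) (p : V →ₗ.[K] V), finrank K V = finrank K p.domain + k →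
      Function.Injective p.toFun →
      (∀ x y : p.domain, B (p x) (p y) = B x.1 y.1) →
      ∃ e : V ≃ₗ[K] V, (∀ x y, B (e x) (e y) = B x y) ∧ ∀ x : p.domain, e x.1 = p x := by
  intro k
  induction k with
  | zero =>
    intro p hrank hinj hiso
    have htop : p.domain = ⊤ := Submodule.eq_top_of_finrank_eq (by omega)
    let g : V →ₗ[K] V := p.toFun ∘ₗ (LinearEquiv.ofTop p.domain htop).symm.toLinearMap
    have hg : ∀ x : p.domain, g x.1 = p x := by
      intro x
      show p.toFun ((LinearEquiv.ofTop p.domain htop).symm x.1) = p.toFun x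
      exact congrArg p.toFun (Subtype.ext (LinearEquiv.coe_ofTop_symm_apply _ _))
    have hginj : Function.Injective g :=
      hinj.comp (LinearEquiv.ofTop p.domain htop).symm.injective
    have hgsurj : Function.Surjective g := LinearMap.injective_iff_surjective.mp hginj
    refine ⟨LinearEquiv.ofBijective g ⟨hginj, hgsurj⟩, ?_, ?_⟩
    · intro x y
      have hx := hiso ((LinearEquiv.ofTop p.domain htop).symm x)
        ((LinearEquiv.ofTop p.domain htop).symm y)
      rw [LinearEquiv.coe_ofTop_symm_apply, LinearEquiv.coe_ofTop_symm_apply] at hx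
      exact hx
    · intro x
      exact hg x
  | succ k ih =>
    intro p hrank hinj hiso
    have hne : p.domain ≠ ⊤ := by
      intro h
      rw [h, finrank_top] at hrank
      omega
    obtain ⟨v, hv⟩ : ∃ v, v ∉ p.domain := by
      by_contra h
      push_neg at h
      exact hne (Submodule.eq_top_iff'.mpr h)
    obtain ⟨w, hw, hpair⟩ := exists_extension_vector hB halt p hinj hiso v hv
    have hv0 : v ≠ 0 := fun h => hv (h ▸ p.domain.zero_mem)
    set p' := p.supSpanSingleton v w hv with hp'
    have hdom : p'.domain = p.domain ⊔ K ∙ v := LinearPMap.domain_supSpanSingleton ..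
    -- decomposition of elements of p'.domain
    have hdecomp : ∀ z : p'.domain, ∃ (a : V) (ha : a ∈ p.domain) (c : K),
        z.1 = a + c • v ∧ p' z = p ⟨a, ha⟩ + c • w := by
      rintro ⟨z, hz⟩
      rw [hdom] at hz
      obtain ⟨a, ha, s, hs, hzeq⟩ := Submodule.mem_sup.mp hz
      obtain ⟨c, rfl⟩ := Submodule.mem_span_singleton.mp hs
      refine ⟨a, ha, c, hzeq.symm, ?_⟩
      have hzz : (⟨z, hz⟩ : p'.domain) =
          ⟨a + c • v, Submodule.mem_sup.2 ⟨a, ha, _, Submodule.mem_span_singleton.2 ⟨c, rfl⟩, rfl⟩⟩ :=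
        Subtype.ext hzeq.symm
      rw [hzz]
      exact p.supSpanSingleton_apply_mk v w hv a ha c
    -- rank of the new domain
    have hinf : p.domain ⊓ (K ∙ v) = ⊥ := by
      rw [Submodule.eq_bot_iff]
      rintro x ⟨hx1, hx2⟩
      obtain ⟨c, rfl⟩ := Submodule.mem_span_singleton.mp hx2
      rcases eq_or_ne c 0 with h | h
      · rw [h, zero_smul]
      · exact absurd (by simpa [h] using p.domain.smul_mem c⁻¹ hx1) hv
    have hrank' : finrank K V = finrank K p'.domain + k := by
      have h1 := Submodule.finrank_sup_add_finrank_inf_eq p.domain (K ∙ v)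
      rw [hinf, finrank_bot, add_zero, finrank_span_singleton hv0] at h1
      rw [show p'.domain = p.domain ⊔ K ∙ v from hdom, h1]
      omega
    -- injectivity of p'
    have hinj' : Function.Injective p'.toFun := by
      rw [← LinearMap.ker_eq_bot, Submodule.eq_bot_iff]
      intro z hz
      have hz0 : p' z = 0 := hz
      obtain ⟨a, ha, c, hzeq, hpz⟩ := hdecomp z
      rw [hpz] at hz0
      rcases eq_or_ne c 0 with h | h
      · rw [h, zero_smul, add_zero] at hz0
        have : (⟨a, ha⟩ : p.domain) = 0 := hinj (by simpa using hz0)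
        have ha0 : a = 0 := congrArg Subtype.val this
        apply Subtype.ext
        rw [hzeq, ha0, h, zero_smul, add_zero]; simp
      · exfalso
        apply hw
        have hcw : c • w = -(p ⟨a, ha⟩) := by
          rw [eq_neg_iff_add_eq_zero, add_comm]; exact hz0
        have hwp : w = p ((-c⁻¹) • ⟨a, ha⟩) := by
          have h1 : w = c⁻¹ • (c • w) := (inv_smul_smul₀ h w).symm
          rw [h1, hcw, p.map_smul]
          rw [smul_neg, ← neg_smul]
        rw [hwp]
        exact LinearMap.mem_range_self _ _
    -- isometry of p'
    have hiso' : ∀ x y : p'.domain, B (p' x) (p' y) = B x.1 y.1 := by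
      intro x y
      obtain ⟨a, ha, c, hxeq, hpx⟩ := hdecomp x
      obtain ⟨b, hb, d, hyeq, hpy⟩ := hdecomp y
      rw [hpx, hpy, hxeq, hyeq]
      have h1 : B (p ⟨a, ha⟩) (p ⟨b, hb⟩) = B a b := hiso ⟨a, ha⟩ ⟨b, hb⟩
      have h2 : B w (p ⟨b, hb⟩) = B v b := hpair ⟨b, hb⟩
      have h3 : B w (p ⟨a, ha⟩) = B v a := hpair ⟨a, ha⟩
      have h4 : B (p ⟨a, ha⟩) w = B a v := by
        rw [skew halt, h3, skew halt v a]; ring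
      simp only [map_add, map_smul, LinearMap.add_apply, LinearMap.smul_apply, smul_eq_mul]
      rw [h1, h2, h4, halt w, halt v]
    obtain ⟨e, he1, he2⟩ := ih p' hrank' hinj' hiso'
    refine ⟨e, he1, ?_⟩
    intro x
    have hmem : x.1 ∈ p'.domain := by
      rw [hdom]; exact Submodule.mem_sup_left x.2
    have h5 := he2 ⟨x.1, hmem⟩
    rw [h5]
    have hzz : (⟨x.1, hmem⟩ : p'.domain) = ⟨x.1 + (0 : K) • v,
        Submodule.mem_sup.2 ⟨x.1, x.2, _, Submodule.mem_span_singleton.2 ⟨0, rfl⟩, rfl⟩⟩ :=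
      Subtype.ext (by simp)
    rw [hzz, p.supSpanSingleton_apply_mk v w hv x.1 x.2 0]
    simp

/-- Witt-type extension: an injective isometry from a subspace of a finite-dimensional
space with a nondegenerate alternating bilinear form extends to a global isometry. -/
lemma bilin_extension (hB : B.Nondegenerate) (halt : B.IsAlt) (W : Submodule K V)
    (φ : W →ₗ[K] V) (hinj : Function.Injective φ)
    (hiso : ∀ x y : W, B (φ x) (φ y) = B x.1 y.1) :
    ∃ e : V ≃ₗ[K] V, (∀ x y, B (e x) (e y) = B x y) ∧ ∀ x : W, e x.1 = φ x :=
  extension_aux hB halt (finrank K V - finrank K W) ⟨W, φ⟩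
    (by show finrank K V = finrank K ↥W + _; have := Submodule.finrank_le W; omega) hinj hiso

end Extension

section Proj

variable {n : ℕ} {M : Type*} [Fintype M] [DecidableEq M] (party : Fin n → M)

lemma sympForm_apply (f g : PV (Fin n)) :
    sympForm (Fin n) f g = ∑ j, ((f j).1 * (g j).2 + (f j).2 * (g j).1) := rfl

/-- Projection onto the coordinates of party `α`. -/
def projP (α : M) : PV (Fin n) →ₗ[ZMod 2] PV (Fin n) where
  toFun f := fun j => if party j = α then f j else 0
  map_add' f g := funext fun j => by by_cases h : party j = α <;> simp [h]
  map_smul' c f := funext fun j => by by_cases h : party j = α <;> simp [h]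

lemma projP_apply (α : M) (f : PV (Fin n)) (j : Fin n) :
    projP party α f j = if party j = α then f j else 0 := rfl

lemma projP_mem (α : M) (f : PV (Fin n)) : projP party α f ∈ localSub party α :=
  fun j hj => if_neg hj

/-- Projection onto the local subspace of party `α`. -/
def projL (α : M) : PV (Fin n) →ₗ[ZMod 2] ↥(localSub party α) :=
  LinearMap.codRestrict _ (projP party α) (projP_mem party α)

lemma projL_coe (α : M) (f : PV (Fin n)) : (projL party α f : PV (Fin n)) = projP party α f :=
  rfl

lemma projP_eq_self {α : M} {f : PV (Fin n)} (hf : f ∈ localSub party α) :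
    projP party α f = f := by
  funext j
  by_cases h : party j = α
  · simp [projP_apply, h]
  · simp [projP_apply, h, hf j h]

lemma projP_eq_zero {α β : M} {f : PV (Fin n)} (hf : f ∈ localSub party β) (hne : α ≠ β) :
    projP party α f = 0 := by
  funext j
  by_cases h : party j = α
  · simp only [projP_apply, h, if_pos]
    exact hf j (by rw [h]; exact hne)
  · simp [projP_apply, h]

lemma sum_projP (f : PV (Fin n)) : ∑ α : M, projP party α f = f := by
  funext j
  rw [Finset.sum_apply]
  simp only [projP_apply]
  rw [Finset.sum_ite_eq (Finset.univ : Finset M) (party j) (fun _ => f j)]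
  simp

lemma colocal_iff_projP (α : M) (f : PV (Fin n)) :
    (∀ j, party j = α → f j = 0) ↔ projP party α f = 0 := by
  constructor
  · intro h
    funext j
    by_cases hj : party j = α
    · simp [projP_apply, hj, h j hj]
    · simp [projP_apply, hj]
  · intro h j hj
    have := congrFun h j
    rwa [projP_apply, if_pos hj] at this

lemma sympOn_eq_proj (α : M) (f g : PV (Fin n)) :
    sympOn (partySet party α) f g = sympForm (Fin n) (projP party α f) (projP party α g) := by
  rw [sympForm_apply, sympOn, partySet, Finset.sum_filter]
  refine Finset.sum_congr rfl fun j _ => ?_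
  by_cases h : party j = α
  · simp [projP_apply, h]
  · simp [projP_apply, h]

lemma sympForm_eq_sympOn {α : M} {f g : PV (Fin n)} (hf : f ∈ localSub party α)
    (hg : g ∈ localSub party α) :
    sympForm (Fin n) f g = sympOn (partySet party α) f g := by
  rw [sympOn_eq_proj, projP_eq_self party hf, projP_eq_self party hg]

lemma sympForm_isAlt : (sympForm (Fin n)).IsAlt := by
  intro f
  rw [sympForm_apply]
  refine Finset.sum_eq_zero fun j _ => ?_
  have : ∀ a b : ZMod 2, a * b + b * a = 0 := by decide
  exact this _ _

lemma restrict_nondegenerate (α : M) :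
    ((sympForm (Fin n)).restrict (localSub party α)).Nondegenerate := by
  refine (LinearMap.IsRefl.nondegenerate_iff_separatingLeft
    (fun x y h => (sympForm_isAlt (n := n)).isRefl x.1 y.1 h)).mpr ?_
  intro x hx
  by_contra hx0
  have hxne : (x : PV (Fin n)) ≠ 0 := fun h => hx0 (Subtype.ext h)
  obtain ⟨j, hj⟩ : ∃ j, (x : PV (Fin n)) j ≠ 0 := by
    by_contra h
    push_neg at h
    exact hxne (funext h)
  have hpj : party j = α := by
    by_contra h
    exact hj (x.2 j h)
  set q : ZMod 2 × ZMod 2 := if ((x : PV (Fin n)) j).1 = 0 then (1, 0) else (0, 1) with hq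
  set g : PV (Fin n) := Pi.single j q with hg
  have hgmem : g ∈ localSub party α := by
    intro j' hj'
    have : j' ≠ j := fun h => hj' (h ▸ hpj)
    simp [hg, Pi.single_eq_of_ne this]
  have hterm : ((x : PV (Fin n)) j).1 * q.2 + ((x : PV (Fin n)) j).2 * q.1 ≠ 0 := by
    rcases Prod.mk.eta (p := (x : PV (Fin n)) j) ▸ hj with h
    revert h
    rw [hq]
    generalize (x : PV (Fin n)) j = y
    revert y
    decide
  have hform : sympForm (Fin n) (x : PV (Fin n)) g =
      ((x : PV (Fin n)) j).1 * q.2 + ((x : PV (Fin n)) j).2 * q.1 := by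
    rw [sympForm_apply]
    rw [Finset.sum_eq_single j]
    · rw [hg, Pi.single_eq_same]
    · intro j' _ hj'
      rw [hg, Pi.single_eq_of_ne hj']
      simp
    · intro h
      exact absurd (Finset.mem_univ j) h
  have := hx ⟨g, hgmem⟩
  rw [LinearMap.BilinForm.restrict_apply] at this
  exact hterm (hform ▸ this)

end Proj

set_option maxHeartbeats 2000000 in
/-- local-equivalence lemma. Two subspaces `S, S'` of
`F_2^{2n}` are related by a direct sum of local symplectic transformations iff
there is a linear invertible map `T : S → S'` preserving the local symplectic
forms and mapping co-local subgroups onto co-local subgroups. -/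
theorem local_symplectic_equivalence_iff {n : ℕ} {M : Type*} [Fintype M]
    [DecidableEq M] (party : Fin n → M) (S S' : Submodule (ZMod 2) (PV (Fin n))) :
    (∃ u : PV (Fin n) ≃ₗ[ZMod 2] PV (Fin n),
      (∀ α : M, Submodule.map (u : PV (Fin n) →ₗ[ZMod 2] PV (Fin n))
          (localSub party α) = localSub party α) ∧
      (∀ α : M, ∀ f ∈ localSub party α, ∀ g ∈ localSub party α,
          sympForm (Fin n) (u f) (u g) = sympForm (Fin n) f g) ∧
      Submodule.map (u : PV (Fin n) →ₗ[ZMod 2] PV (Fin n)) S = S') ↔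
    (∃ T : S →ₗ[ZMod 2] S', Function.Bijective T ∧
      (∀ (f g : S) (α : M),
        sympOn (partySet party α) (T f : PV (Fin n)) (T g : PV (Fin n)) =
          sympOn (partySet party α) (f : PV (Fin n)) (g : PV (Fin n))) ∧
      (∀ (α : M) (f : S),
        (∀ j, party j = α → (f : PV (Fin n)) j = 0) ↔
          (∀ j, party j = α → (T f : PV (Fin n)) j = 0))) := by
  constructor
  · -- forward direction
    rintro ⟨u, h1, h2, h3⟩
    have humem : ∀ (β : M) (f : PV (Fin n)), f ∈ localSub party β → u f ∈ localSub party β := by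
      intro β f hf
      rw [← h1 β]
      exact Submodule.mem_map_of_mem hf
    have hcomm : ∀ (α : M) (f : PV (Fin n)), projP party α (u f) = u (projP party α f) := by
      intro α f
      have hsum : projP party α (u f) = ∑ β : M, projP party α (u (projP party β f)) := by
        conv_lhs => rw [← sum_projP party f]
        rw [map_sum, map_sum]
      rw [hsum, Finset.sum_eq_single α]
      · rw [projP_eq_self party (humem α _ (projP_mem party α f))]
      · intro β _ hβ
        rw [projP_eq_zero party (humem β _ (projP_mem party β f)) (Ne.symm hβ)]
      · intro h
        exact absurd (Finset.mem_univ α) h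
    have hus : ∀ s : ↥S, u s.1 ∈ S' := fun s => h3 ▸ Submodule.mem_map_of_mem s.2
    refine ⟨LinearMap.codRestrict S'
      ((u : PV (Fin n) →ₗ[ZMod 2] PV (Fin n)) ∘ₗ S.subtype) (fun s => hus s), ?_, ?_, ?_⟩
    · constructor
      · intro a b h
        have h' : u a.1 = u b.1 := congrArg Subtype.val h
        exact Subtype.ext (u.injective h')
      · intro s'
        have : (s' : PV (Fin n)) ∈ Submodule.map
            (u : PV (Fin n) →ₗ[ZMod 2] PV (Fin n)) S := h3 ▸ s'.2
        obtain ⟨f, hf, hfe⟩ := this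
        exact ⟨⟨f, hf⟩, Subtype.ext hfe⟩
    · intro f g α
      show sympOn (partySet party α) (u f.1) (u g.1) = _
      rw [sympOn_eq_proj, hcomm, hcomm,
        h2 α _ (projP_mem party α f.1) _ (projP_mem party α g.1), ← sympOn_eq_proj]
    · intro α f
      rw [colocal_iff_projP]
      have : ((LinearMap.codRestrict S'
          ((u : PV (Fin n) →ₗ[ZMod 2] PV (Fin n)) ∘ₗ S.subtype) (fun s => hus s)) f : PV (Fin n))
          = u f.1 := rfl
      rw [this, colocal_iff_projP, hcomm]
      constructor
      · intro h
        rw [h, map_zero]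
      · intro h
        exact (LinearEquiv.map_eq_zero_iff u).mp h
  · -- backward direction
    rintro ⟨T, hTbij, hTsymp, hTco⟩
    classical
    have hdata : ∀ α : M, ∃ e : ↥(localSub party α) ≃ₗ[ZMod 2] ↥(localSub party α),
        (∀ x y, ((sympForm (Fin n)).restrict (localSub party α)) (e x) (e y) =
          ((sympForm (Fin n)).restrict (localSub party α)) x y) ∧
        (∀ s : ↥S, e (projL party α s.1) = projL party α ((T s) : PV (Fin n))) := by
      intro α
      set pα : ↥S →ₗ[ZMod 2] ↥(localSub party α) := (projL party α) ∘ₗ S.subtype with hpα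
      set qα : ↥S →ₗ[ZMod 2] ↥(localSub party α) :=
        (projL party α) ∘ₗ S'.subtype ∘ₗ T with hqα
      have hker : LinearMap.ker pα ≤ LinearMap.ker qα := by
        intro s hs
        have h0 : projP party α s.1 = 0 := congrArg Subtype.val (LinearMap.mem_ker.mp hs)
        have h1 : ∀ j, party j = α → (s : PV (Fin n)) j = 0 :=
          (colocal_iff_projP party α _).mpr h0
        have h2 := (hTco α s).mp h1
        show qα s = 0
        exact Subtype.ext ((colocal_iff_projP party α _).mp h2)
      set Wα := LinearMap.range pα with hWα
      set φα : ↥Wα →ₗ[ZMod 2] ↥(localSub party α) :=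
        (Submodule.liftQ (LinearMap.ker pα) qα hker) ∘ₗ
          (pα.quotKerEquivRange).symm.toLinearMap with hφα
      have hφ : ∀ s : ↥S, φα ⟨pα s, LinearMap.mem_range_self _ s⟩ = qα s := by
        intro s
        have h1 : pα.quotKerEquivRange (Submodule.Quotient.mk s) =
            ⟨pα s, LinearMap.mem_range_self _ s⟩ :=
          Subtype.ext (pα.quotKerEquivRange_apply_mk s)
        show (Submodule.liftQ (LinearMap.ker pα) qα hker)
          (pα.quotKerEquivRange.symm ⟨pα s, LinearMap.mem_range_self _ s⟩) = qα s
        rw [← h1, LinearEquiv.symm_apply_apply]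
        exact Submodule.liftQ_apply _ qα s
      have hsurj : ∀ x : ↥Wα, ∃ s : ↥S, (⟨pα s, LinearMap.mem_range_self _ s⟩ : ↥Wα) = x := by
        intro x
        obtain ⟨s, hs⟩ := x.2
        exact ⟨s, Subtype.ext hs⟩
      have hφinj : Function.Injective φα := by
        rw [← LinearMap.ker_eq_bot, Submodule.eq_bot_iff]
        intro x hx
        obtain ⟨s, rfl⟩ := hsurj x
        have h0 : qα s = 0 := by rw [← hφ s]; exact hx
        have h1 : ∀ j, party j = α → ((T s : PV (Fin n))) j = 0 :=
          (colocal_iff_projP party α _).mpr (congrArg Subtype.val h0)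
        have h2 := (hTco α s).mpr h1
        have h3 : pα s = 0 := Subtype.ext ((colocal_iff_projP party α _).mp h2)
        exact Subtype.ext h3
      have hφiso : ∀ x y : ↥Wα,
          ((sympForm (Fin n)).restrict (localSub party α)) (φα x) (φα y) =
          ((sympForm (Fin n)).restrict (localSub party α)) x.1 y.1 := by
        intro x y
        obtain ⟨s, rfl⟩ := hsurj x
        obtain ⟨t, rfl⟩ := hsurj y
        rw [hφ s, hφ t, LinearMap.BilinForm.restrict_apply, LinearMap.BilinForm.restrict_apply]
        show sympForm (Fin n) (projP party α ((T s) : PV (Fin n)))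
            (projP party α ((T t) : PV (Fin n))) =
          sympForm (Fin n) (projP party α (s : PV (Fin n))) (projP party α (t : PV (Fin n)))
        rw [← sympOn_eq_proj, ← sympOn_eq_proj, hTsymp s t α]
      obtain ⟨e, he1, he2⟩ := bilin_extension (restrict_nondegenerate party α)
        (fun x => by
          rw [LinearMap.BilinForm.restrict_apply]
          exact sympForm_isAlt _) Wα φα hφinj hφiso
      refine ⟨e, he1, ?_⟩
      intro s
      have hx : projL party α s.1 = ((⟨pα s, LinearMap.mem_range_self _ s⟩ : ↥Wα) :
          ↥(localSub party α)) := rfl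
      rw [hx, he2 ⟨pα s, LinearMap.mem_range_self _ s⟩, hφ s]
      rfl
    choose e he1 he2 using hdata
    have hLself : ∀ (β : M) (x : ↥(localSub party β)), projL party β ↑x = x :=
      fun β x => Subtype.ext (projP_eq_self party x.2)
    have hLzero : ∀ (β γ : M), β ≠ γ → ∀ (x : ↥(localSub party γ)),
        projL party β (↑x : PV (Fin n)) = 0 :=
      fun β γ hne x => Subtype.ext (projP_eq_zero party x.2 hne)
    set U : PV (Fin n) →ₗ[ZMod 2] PV (Fin n) :=
      ∑ α : M, (localSub party α).subtype ∘ₗ (e α).toLinearMap ∘ₗ projL party α with hU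
    set U' : PV (Fin n) →ₗ[ZMod 2] PV (Fin n) :=
      ∑ α : M, (localSub party α).subtype ∘ₗ (e α).symm.toLinearMap ∘ₗ projL party α with hU'
    have hUapply : ∀ f, U f = ∑ α : M, ((e α) (projL party α f) : PV (Fin n)) := by
      intro f
      rw [hU, LinearMap.sum_apply]
      rfl
    have hU'apply : ∀ f, U' f = ∑ α : M, ((e α).symm (projL party α f) : PV (Fin n)) := by
      intro f
      rw [hU', LinearMap.sum_apply]
      rfl
    have hsumloc : ∀ (β : M) (x : (α : M) → ↥(localSub party α)),
        projL party β (∑ α : M, ((x α) : PV (Fin n))) = x β := by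
      intro β x
      rw [map_sum, Finset.sum_eq_single β]
      · exact hLself β (x β)
      · intro γ _ hγ
        exact hLzero β γ (Ne.symm hγ) (x γ)
      · intro h
        exact absurd (Finset.mem_univ β) h
    have hprojU : ∀ (β : M) (f : PV (Fin n)),
        projL party β (U f) = e β (projL party β f) := by
      intro β f
      rw [hUapply]
      exact hsumloc β (fun α => (e α) (projL party α f))
    have hprojU' : ∀ (β : M) (f : PV (Fin n)),
        projL party β (U' f) = (e β).symm (projL party β f) := by
      intro β f
      rw [hU'apply]
      exact hsumloc β (fun α => (e α).symm (projL party α f))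
    have hUU' : ∀ f, U (U' f) = f := by
      intro f
      calc U (U' f) = ∑ α : M, ((e α) (projL party α (U' f)) : PV (Fin n)) := hUapply _
        _ = ∑ α : M, projP party α f := by
            refine Finset.sum_congr rfl fun α _ => ?_
            rw [hprojU' α f, LinearEquiv.apply_symm_apply]
            rfl
        _ = f := sum_projP party f
    have hU'U : ∀ f, U' (U f) = f := by
      intro f
      calc U' (U f) = ∑ α : M, ((e α).symm (projL party α (U f)) : PV (Fin n)) := hU'apply _
        _ = ∑ α : M, projP party α f := by
            refine Finset.sum_congr rfl fun α _ => ?_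
            rw [hprojU α f, LinearEquiv.symm_apply_apply]
            rfl
        _ = f := sum_projP party f
    refine ⟨LinearEquiv.ofLinear U U' (LinearMap.ext hUU') (LinearMap.ext hU'U),
      ?_, ?_, ?_⟩
    · -- preserves local subspaces
      intro β
      have hUloc : ∀ x : ↥(localSub party β), U ↑x = ((e β x) : PV (Fin n)) := by
        intro x
        rw [hUapply, Finset.sum_eq_single β]
        · rw [hLself β x]
        · intro γ _ hγ
          rw [hLzero γ β hγ x, map_zero]
          rfl
        · intro h
          exact absurd (Finset.mem_univ β) h
      apply le_antisymm
      · rintro x ⟨f, hf, rfl⟩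
        show U f ∈ localSub party β
        have : U f = ((e β ⟨f, hf⟩) : PV (Fin n)) := hUloc ⟨f, hf⟩
        rw [this]
        exact (e β ⟨f, hf⟩).2
      · intro g hg
        refine ⟨↑((e β).symm ⟨g, hg⟩), ((e β).symm ⟨g, hg⟩).2, ?_⟩
        show U ↑((e β).symm ⟨g, hg⟩) = g
        rw [hUloc ((e β).symm ⟨g, hg⟩), LinearEquiv.apply_symm_apply]
    · -- preserves local forms
      intro α f hf g hg
      have hUloc : ∀ x : ↥(localSub party α), U ↑x = ((e α x) : PV (Fin n)) := by
        intro x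
        rw [hUapply, Finset.sum_eq_single α]
        · rw [hLself α x]
        · intro γ _ hγ
          rw [hLzero γ α hγ x, map_zero]
          rfl
        · intro h
          exact absurd (Finset.mem_univ α) h
      show sympForm (Fin n) (U f) (U g) = sympForm (Fin n) f g
      rw [show U f = ((e α ⟨f, hf⟩) : PV (Fin n)) from hUloc ⟨f, hf⟩,
        show U g = ((e α ⟨g, hg⟩) : PV (Fin n)) from hUloc ⟨g, hg⟩]
      have := he1 α ⟨f, hf⟩ ⟨g, hg⟩
      rw [LinearMap.BilinForm.restrict_apply, LinearMap.BilinForm.restrict_apply] at this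
      exact this
    · -- maps S onto S'
      have hUT : ∀ s : ↥S, U ↑s = ((T s) : PV (Fin n)) := by
        intro s
        calc U ↑s = ∑ α : M, ((e α) (projL party α (s : PV (Fin n))) : PV (Fin n)) := hUapply _
          _ = ∑ α : M, projP party α ((T s) : PV (Fin n)) := by
              refine Finset.sum_congr rfl fun α _ => ?_
              rw [he2 α s]
              rfl
          _ = ((T s) : PV (Fin n)) := sum_projP party _
      apply le_antisymm
      · rintro x ⟨f, hf, rfl⟩
        show U f ∈ S'
        rw [show U f = ((T ⟨f, hf⟩) : PV (Fin n)) from hUT ⟨f, hf⟩]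
        exact (T ⟨f, hf⟩).2
      · intro g hg
        obtain ⟨s, hs⟩ := hTbij.2 ⟨g, hg⟩
        exact ⟨↑s, s.2, by rw [show (LinearEquiv.ofLinear U U' (LinearMap.ext hUU')
          (LinearMap.ext hU'U) : PV (Fin n) →ₗ[ZMod 2] PV (Fin n)) ↑s = U ↑s from rfl,
          hUT s, hs]⟩
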